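/- Let X and Z be finite types, let μ be a pmf on X, and for each x with μ(x) > 0 let q(·|x) and p(·|x) be pmfs on Z with q(·|x) absolutely continuous with respect to p(·|x). Let E ⊆ Z, and set η̄_q = Σ_x μ(x)·Σ_{z∈E} q(z|x), η̄_p = Σ_x μ(x)·Σ_{z∈E} p(z|x), and Δ̄ = Σ_x μ(x)·KL(q(·|x)‖p(·|x)). Then the Bernoulli-KL audit certificate holds: d_bin(η̄_q ‖ η̄_p) ≤ Δ̄. (Equivalently, with codebook agreement A = 1 − η̄_q when E is the encoder–decoder disagreement event, d_bin(1−A ‖ η̄_p) ≤ Δ̄.) -/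

import Mathlib

/-- A probability mass function on a finite type: nonnegative and summing to 1. -/
def IsPMF {Z : Type*} [Fintype Z] (q : Z → ℝ) : Prop :=
  (∀ z, 0 ≤ q z) ∧ ∑ z, q z = 1

/-- KL divergence between pmfs on a finite type (convention 0·log 0 = 0,
automatic in Lean). -/
noncomputable def KL {Z : Type*} [Fintype Z] (q p : Z → ℝ) : ℝ :=
  ∑ z, q z * Real.log (q z / p z)

/-- Binary KL divergence `d_bin(a‖b)` (convention 0·log 0 = 0, automatic in Lean). -/
noncomputable def dbin (a b : ℝ) : ℝ :=
  a * Real.log (a / b) + (1 - a) * Real.log ((1 - a) / (1 - b))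


/-- Pointwise bound used in the log-sum inequality. -/
lemma logsum_pointwise (a b T S : ℝ) (ha : 0 ≤ a) (hb : 0 ≤ b)
    (hT : 0 < T) (hS : 0 < S) (hab : b = 0 → a = 0) :
    a * Real.log (T / S) + (a - b * (T / S)) ≤ a * Real.log (a / b) := by
  rcases eq_or_lt_of_le ha with h0 | hapos
  · simp only [← h0, zero_mul, zero_add, zero_sub]
    have : 0 ≤ b * (T / S) := mul_nonneg hb (div_pos hT hS).le
    linarith
  · have hbpos : 0 < b := by
      rcases eq_or_lt_of_le hb with h | h
      · exact absurd (hab h.symm) (ne_of_gt hapos)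
      · exact h
    have hy : 0 < (a / b) / (T / S) := div_pos (div_pos hapos hbpos) (div_pos hT hS)
    have hlog : Real.log ((a / b) / (T / S))⁻¹ ≤ ((a / b) / (T / S))⁻¹ - 1 :=
      Real.log_le_sub_one_of_pos (inv_pos.2 hy)
    rw [Real.log_inv] at hlog
    have hge : 1 - ((a / b) / (T / S))⁻¹ ≤ Real.log ((a / b) / (T / S)) := by linarith
    have hsplit : Real.log ((a / b) / (T / S)) = Real.log (a / b) - Real.log (T / S) :=
      Real.log_div (ne_of_gt (div_pos hapos hbpos)) (ne_of_gt (div_pos hT hS))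
    rw [hsplit] at hge
    have hmul := mul_le_mul_of_nonneg_left hge ha
    have hinv : ((a / b) / (T / S))⁻¹ = (b * T) / (a * S) := by
      field_simp
    rw [hinv] at hmul
    have hval : a * (1 - b * T / (a * S)) = a - b * (T / S) := by
      field_simp
    rw [hval] at hmul
    linarith [hmul, mul_sub a (Real.log (a / b)) (Real.log (T / S))]

/-- Log-sum inequality. -/
lemma log_sum_ineq {ι : Type*} (s : Finset ι) (a b : ι → ℝ)
    (ha : ∀ i ∈ s, 0 ≤ a i) (hb : ∀ i ∈ s, 0 ≤ b i)
    (hab : ∀ i ∈ s, b i = 0 → a i = 0) :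
    (∑ i ∈ s, a i) * Real.log ((∑ i ∈ s, a i) / (∑ i ∈ s, b i))
      ≤ ∑ i ∈ s, a i * Real.log (a i / b i) := by
  set T := ∑ i ∈ s, a i with hTdef
  set S := ∑ i ∈ s, b i with hSdef
  have hT0 : 0 ≤ T := Finset.sum_nonneg ha
  rcases eq_or_lt_of_le hT0 with hT | hT
  · have hall : ∀ i ∈ s, a i = 0 :=
      (Finset.sum_eq_zero_iff_of_nonneg ha).1 hT.symm
    have : ∑ i ∈ s, a i * Real.log (a i / b i) = 0 :=
      Finset.sum_eq_zero fun i hi => by rw [hall i hi, zero_mul]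
    rw [this, ← hT, zero_mul]
  · have hS : 0 < S := by
      rcases eq_or_lt_of_le (Finset.sum_nonneg hb : (0:ℝ) ≤ S) with h | h
      · exfalso
        have hballz : ∀ i ∈ s, b i = 0 :=
          (Finset.sum_eq_zero_iff_of_nonneg hb).1 h.symm
        have : T = 0 := Finset.sum_eq_zero fun i hi => hab i hi (hballz i hi)
        linarith
      · exact h
    have key : ∑ i ∈ s, (a i * Real.log (T / S) + (a i - b i * (T / S)))
        ≤ ∑ i ∈ s, a i * Real.log (a i / b i) :=
      Finset.sum_le_sum fun i hi =>
        logsum_pointwise (a i) (b i) T S (ha i hi) (hb i hi) hT hS (hab i hi)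
    have hls : ∑ i ∈ s, (a i * Real.log (T / S) + (a i - b i * (T / S)))
        = T * Real.log (T / S) := by
      rw [Finset.sum_add_distrib, Finset.sum_sub_distrib, ← Finset.sum_mul,
        ← Finset.sum_mul, ← hTdef, ← hSdef]
      field_simp
      ring
    linarith [key, hls.symm.le]

/-- **Bernoulli-KL audit certificate.**
With `η̄_q = Σ_x μ(x)·q(E|x)`, `η̄_p = Σ_x μ(x)·p(E|x)` and average variational gap
`Δ̄ = Σ_x μ(x)·KL(q(·|x)‖p(·|x))`, the off-diagonal mass is constrained by
`d_bin(η̄_q ‖ η̄_p) ≤ Δ̄`. -/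
theorem bernoulli_kl_audit_certificate
    {X Z : Type*} [Fintype X] [Fintype Z]
    (μ : X → ℝ) (hμ : IsPMF μ) (q p : X → Z → ℝ)
    (hq : ∀ x, 0 < μ x → IsPMF (q x)) (hp : ∀ x, 0 < μ x → IsPMF (p x))
    (habs : ∀ x, 0 < μ x → ∀ z, p x z = 0 → q x z = 0)
    (E : Finset Z) :
    dbin (∑ x, μ x * ∑ z ∈ E, q x z) (∑ x, μ x * ∑ z ∈ E, p x z)
      ≤ ∑ x, μ x * KL (q x) (p x) := by
  classical
  set w : X × Z → ℝ := fun i => μ i.1 * q i.1 i.2 with hw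
  set v : X × Z → ℝ := fun i => μ i.1 * p i.1 i.2 with hv
  set A := ∑ x, μ x * ∑ z ∈ E, q x z with hA
  set B := ∑ x, μ x * ∑ z ∈ E, p x z with hB
  -- basic positivity case split on μ
  have hμ0 : ∀ x, μ x = 0 ∨ 0 < μ x := fun x => (eq_or_lt_of_le (hμ.1 x)).imp Eq.symm id
  have hwpos : ∀ i : X × Z, 0 ≤ w i := by
    intro i
    rcases hμ0 i.1 with h | h
    · simp [hw, h]
    · exact mul_nonneg h.le ((hq i.1 h).1 i.2)
  have hvpos : ∀ i : X × Z, 0 ≤ v i := by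
    intro i
    rcases hμ0 i.1 with h | h
    · simp [hv, h]
    · exact mul_nonneg h.le ((hp i.1 h).1 i.2)
  have habs' : ∀ i : X × Z, v i = 0 → w i = 0 := by
    intro i hvi
    rcases hμ0 i.1 with h | h
    · simp [hw, h]
    · rcases mul_eq_zero.1 hvi with h0 | h0
      · exact absurd h0 (ne_of_gt h)
      · simp [hw, habs i.1 h i.2 h0]
  -- sums over the two slabs
  have hqsum : ∀ x, μ x * ∑ z, q x z = μ x := by
    intro x
    rcases hμ0 x with h | h
    · simp [h]
    · rw [(hq x h).2, mul_one]
  have hpsum : ∀ x, μ x * ∑ z, p x z = μ x := by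
    intro x
    rcases hμ0 x with h | h
    · simp [h]
    · rw [(hp x h).2, mul_one]
  have h1 : ∑ i ∈ Finset.univ ×ˢ E, w i = A := by
    rw [Finset.sum_product, hA]
    exact Finset.sum_congr rfl fun x _ => by simp [hw, Finset.mul_sum]
  have h2 : ∑ i ∈ Finset.univ ×ˢ E, v i = B := by
    rw [Finset.sum_product, hB]
    exact Finset.sum_congr rfl fun x _ => by simp [hv, Finset.mul_sum]
  have h3 : ∑ i ∈ Finset.univ ×ˢ Eᶜ, w i = 1 - A := by
    rw [Finset.sum_product]
    have : ∀ x : X, ∑ z ∈ Eᶜ, w (x, z) = μ x - μ x * ∑ z ∈ E, q x z := by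
      intro x
      have hsplit : ∑ z ∈ E, q x z + ∑ z ∈ Eᶜ, q x z = ∑ z, q x z :=
        Finset.sum_add_sum_compl E _
      have : ∑ z ∈ Eᶜ, w (x, z) = μ x * ∑ z ∈ Eᶜ, q x z := by simp [hw, Finset.mul_sum]
      rw [this]
      have hm : μ x * ∑ z ∈ E, q x z + μ x * ∑ z ∈ Eᶜ, q x z = μ x := by
        rw [← mul_add, hsplit]; exact hqsum x
      linarith
    rw [Finset.sum_congr rfl fun x _ => this x, Finset.sum_sub_distrib, hμ.2, hA]
  have h4 : ∑ i ∈ Finset.univ ×ˢ Eᶜ, v i = 1 - B := by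
    rw [Finset.sum_product]
    have : ∀ x : X, ∑ z ∈ Eᶜ, v (x, z) = μ x - μ x * ∑ z ∈ E, p x z := by
      intro x
      have hsplit : ∑ z ∈ E, p x z + ∑ z ∈ Eᶜ, p x z = ∑ z, p x z :=
        Finset.sum_add_sum_compl E _
      have : ∑ z ∈ Eᶜ, v (x, z) = μ x * ∑ z ∈ Eᶜ, p x z := by simp [hv, Finset.mul_sum]
      rw [this]
      have hm : μ x * ∑ z ∈ E, p x z + μ x * ∑ z ∈ Eᶜ, p x z = μ x := by
        rw [← mul_add, hsplit]; exact hpsum x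
      linarith
    rw [Finset.sum_congr rfl fun x _ => this x, Finset.sum_sub_distrib, hμ.2, hB]
  -- rewrite the RHS as a joint-sum KL
  have hterm : ∀ i : X × Z,
      μ i.1 * (q i.1 i.2 * Real.log (q i.1 i.2 / p i.1 i.2))
        = w i * Real.log (w i / v i) := by
    intro i
    rcases hμ0 i.1 with h | h
    · simp [hw, hv, h]
    · have : w i / v i = q i.1 i.2 / p i.1 i.2 :=
        mul_div_mul_left _ _ (ne_of_gt h)
      rw [hw, hv]
      simp only []
      rw [show μ i.1 * q i.1 i.2 / (μ i.1 * p i.1 i.2) = q i.1 i.2 / p i.1 i.2 from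
        mul_div_mul_left _ _ (ne_of_gt h), mul_assoc]
  have hRHS : ∑ x, μ x * KL (q x) (p x)
      = ∑ i ∈ Finset.univ ×ˢ E, w i * Real.log (w i / v i)
        + ∑ i ∈ Finset.univ ×ˢ Eᶜ, w i * Real.log (w i / v i) := by
    rw [Finset.sum_product, Finset.sum_product, ← Finset.sum_add_distrib]
    refine Finset.sum_congr rfl fun x _ => ?_
    rw [Finset.sum_add_sum_compl E (fun z => w (x, z) * Real.log (w (x, z) / v (x, z)))]
    rw [KL, Finset.mul_sum]
    exact Finset.sum_congr rfl fun z _ => hterm (x, z)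
  -- two applications of the log-sum inequality
  have ineq1 := log_sum_ineq (Finset.univ ×ˢ E) w v
    (fun i _ => hwpos i) (fun i _ => hvpos i) (fun i _ => habs' i)
  have ineq2 := log_sum_ineq (Finset.univ ×ˢ Eᶜ) w v
    (fun i _ => hwpos i) (fun i _ => hvpos i) (fun i _ => habs' i)
  rw [h1, h2] at ineq1
  rw [h3, h4] at ineq2
  rw [hRHS, dbin]
  exact add_le_add ineq1 ineq2
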